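/- Let K, G : [0,∞) → ℝ be continuous functions with K(t) ≥ G(t) for all t ≥ 0, and let f, m : [0,∞) → ℝ be twice differentiable functions satisfying f''(t) + K(t)·f(t) = 0 with f(0) = 1 and f'(0) = 0, and m''(t) + G(t)·m(t) = 0 with m(0) = 1 and m'(0) = 0. If f(t) > 0 for all t ∈ (0,∞), m(t) > 0 for all t ∈ [0,∞), and ∫₀^∞ 1/m(t)² dt = ∞, then K(t) = G(t) for all t ∈ [0,∞). -/

import Mathlib

/-!
Let `W = f' m - f m'` be the Wronskian of the two solutions. The equations give
`W' = (G - K) f m ≤ 0`, and `W 0 = 0`, so `W` is nonincreasing and nonpositive on `[0, ∞)`.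
If `K t₁ ≠ G t₁`, then `K > G` on a right neighbourhood of `t₁`, where `f m > 0`, so `W` drops
strictly there: `W ≤ -c < 0` on some `[t₀, ∞)`. Since `(f / m)' = W / m² ≤ -c / m²` and `f / m ≥ 0`,
we get `c ∫_{t₀}^t 1 / m² ≤ f t₀ / m t₀` for all `t`, contradicting `∫₀^∞ 1 / m² = ∞`.
-/

open Set MeasureTheory Filter Topology

noncomputable def wronskian (f m : ℝ → ℝ) (t : ℝ) : ℝ := deriv f t * m t - f t * deriv m t

theorem hasDerivAt_wronskian {f m : ℝ → ℝ} {k g t : ℝ}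
    (hf : DifferentiableAt ℝ f t) (hf' : DifferentiableAt ℝ (deriv f) t)
    (hm : DifferentiableAt ℝ m t) (hm' : DifferentiableAt ℝ (deriv m) t)
    (hfode : deriv (deriv f) t + k * f t = 0) (hmode : deriv (deriv m) t + g * m t = 0) :
    HasDerivAt (wronskian f m) ((g - k) * (f t * m t)) t := by
  refine ((hf'.hasDerivAt.mul hm.hasDerivAt).sub (hf.hasDerivAt.mul hm'.hasDerivAt)).congr_deriv ?_
  linear_combination m t * hfode - f t * hmode

theorem hasDerivAt_div_wronskian {f m : ℝ → ℝ} {t : ℝ}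
    (hf : DifferentiableAt ℝ f t) (hm : DifferentiableAt ℝ m t) (hmt : m t ≠ 0) :
    HasDerivAt (fun s => f s / m s) (wronskian f m t / m t ^ 2) t :=
  hf.hasDerivAt.div hm.hasDerivAt hmt

theorem antitoneOn_Ici_of_hasDerivAt_nonpos {W W' : ℝ → ℝ} {a : ℝ}
    (hW : ∀ t ≥ a, HasDerivAt W (W' t) t) (hW' : ∀ t > a, W' t ≤ 0) : AntitoneOn W (Ici a) :=
  antitoneOn_of_hasDerivWithinAt_nonpos (convex_Ici a)
    (fun t ht => (hW t ht).continuousAt.continuousWithinAt)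
    (fun t ht => (hW t (le_of_lt (by simpa using ht))).hasDerivWithinAt)
    (fun t ht => hW' t (by simpa using ht))

theorem strictAntiOn_Icc_of_hasDerivAt_neg {W W' : ℝ → ℝ} {a b : ℝ}
    (hW : ∀ t ∈ Icc a b, HasDerivAt W (W' t) t) (hW' : ∀ t ∈ Ioo a b, W' t < 0) :
    StrictAntiOn W (Icc a b) :=
  strictAntiOn_of_hasDerivWithinAt_neg (convex_Icc a b)
    (fun t ht => (hW t ht).continuousAt.continuousWithinAt)
    (fun t ht => (hW t (Ioo_subset_Icc_self (by simpa using ht))).hasDerivWithinAt)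
    (fun t ht => hW' t (by simpa using ht))

theorem ContinuousWithinAt.exists_Ioo_forall_lt {F G : ℝ → ℝ} {s : Set ℝ} {a : ℝ}
    (hs : Ioi a ⊆ s) (hF : ContinuousWithinAt F s a) (hG : ContinuousWithinAt G s a)
    (hlt : G a < F a) : ∃ b > a, ∀ t ∈ Ioo a b, G t < F t := by
  have : ∀ᶠ t in 𝓝[>] a, G t < F t := (hG.mono hs).eventually_lt (hF.mono hs) hlt
  obtain ⟨b, hab, hsub⟩ := mem_nhdsGT_iff_exists_Ioo_subset.1 this
  exact ⟨b, hab, fun t ht => hsub ht⟩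

theorem integral_le_sub_of_hasDerivAt_le_neg {u u' g : ℝ → ℝ} {a t : ℝ}
    (hu : ∀ s ≥ a, HasDerivAt u (u' s) s) (hg : ContinuousOn g (Ici a))
    (hle : ∀ s > a, u' s ≤ -g s) (ht : a ≤ t) :
    ∫ s in a..t, g s ≤ u a - u t := by
  have := intervalIntegral.integral_le_sub_of_hasDeriv_right_of_le (g := fun s => -u s) ht
    (fun s hs => (hu s hs.1).continuousAt.neg.continuousWithinAt)
    (fun s hs => (hu s hs.1.le).neg.hasDerivWithinAt)
    ((hg.mono Icc_subset_Ici_self).integrableOn_Icc)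
    (fun s hs => le_neg_of_le_neg (hle s hs.1))
  linarith

theorem continuousOn_one_div_sq {m : ℝ → ℝ} {s : Set ℝ}
    (hm : ∀ t ∈ s, DifferentiableAt ℝ m t) (hmpos : ∀ t ∈ s, 0 < m t) :
    ContinuousOn (fun t => 1 / m t ^ 2) s := fun t ht =>
  (continuousAt_const.div ((hm t ht).continuousAt.pow 2)
    (pow_pos (hmpos t ht) 2).ne').continuousWithinAt

theorem mul_integral_one_div_sq_le_of_wronskian_le {f m : ℝ → ℝ} {a c t : ℝ}
    (hf : ∀ s ≥ a, DifferentiableAt ℝ f s) (hm : ∀ s ≥ a, DifferentiableAt ℝ m s)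
    (hmpos : ∀ s ≥ a, 0 < m s) (hW : ∀ s > a, wronskian f m s ≤ -c)
    (ht : a ≤ t) (hft : 0 ≤ f t) :
    c * ∫ s in a..t, 1 / m s ^ 2 ≤ f a / m a := by
  rw [← intervalIntegral.integral_const_mul]
  calc ∫ s in a..t, c * (1 / m s ^ 2)
      ≤ f a / m a - f t / m t :=
        integral_le_sub_of_hasDerivAt_le_neg (g := fun s => c * (1 / m s ^ 2))
          (fun s hs => hasDerivAt_div_wronskian (hf s hs) (hm s hs) (hmpos s hs).ne')
          (continuousOn_const.mul (continuousOn_one_div_sq hm hmpos)) (fun s hs => by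
            rw [mul_one_div, ← neg_div]
            exact div_le_div_of_nonneg_right (hW s hs) (by positivity))
          ht
    _ ≤ f a / m a := sub_le_self _ (div_nonneg hft (hmpos t ht).le)

theorem lintegral_ofReal_Ioi_ne_top_of_intervalIntegral_le {g : ℝ → ℝ} {a b C : ℝ} (hab : a ≤ b)
    (hg : ContinuousOn g (Ici a)) (hg0 : ∀ t ≥ b, 0 ≤ g t)
    (hC : ∀ t ≥ b, ∫ s in b..t, g s ≤ C) :
    ∫⁻ t in Ioi a, ENNReal.ofReal (g t) ≠ ⊤ := by
  have hIoc : IntegrableOn g (Ioc a b) :=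
    ((hg.mono Icc_subset_Ici_self).integrableOn_Icc).mono_set Ioc_subset_Icc_self
  have hIoi : IntegrableOn g (Ioi b) := by
    refine integrableOn_Ioi_of_intervalIntegral_norm_bounded C b (b := id) (l := atTop)
      (fun t => ((hg.mono ?_).integrableOn_Icc).mono_set Ioc_subset_Icc_self) tendsto_id ?_
    · exact fun s hs => hab.trans hs.1
    · filter_upwards [eventually_ge_atTop b] with t ht
      calc ∫ s in b..id t, ‖g s‖ = ∫ s in b..t, g s :=
            intervalIntegral.integral_congr fun s hs => by
              rw [id, uIcc_of_le ht] at hs; exact Real.norm_of_nonneg (hg0 s hs.1)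
        _ ≤ C := hC t ht
  have := (hIoc.union hIoi).lintegral_lt_top
  rw [Ioc_union_Ioi_eq_Ioi hab] at this
  exact this.ne

theorem odeComparison_eq_of_integral_div_sq_eq_top_general
    (K G f m : ℝ → ℝ)
    (hK : ContinuousOn K (Ici 0)) (hG : ContinuousOn G (Ici 0))
    (hKG : ∀ t ≥ (0:ℝ), G t ≤ K t)
    (hfd : ∀ t ≥ (0:ℝ), DifferentiableAt ℝ f t)
    (hfd' : ∀ t ≥ (0:ℝ), DifferentiableAt ℝ (deriv f) t)
    (hmd : ∀ t ≥ (0:ℝ), DifferentiableAt ℝ m t)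
    (hmd' : ∀ t ≥ (0:ℝ), DifferentiableAt ℝ (deriv m) t)
    (hfode : ∀ t ≥ (0:ℝ), deriv (deriv f) t + K t * f t = 0)
    (hf'0 : deriv f 0 = 0)
    (hmode : ∀ t ≥ (0:ℝ), deriv (deriv m) t + G t * m t = 0)
    (hm'0 : deriv m 0 = 0)
    (hfpos : ∀ t > (0:ℝ), 0 < f t)
    (hmpos : ∀ t ≥ (0:ℝ), 0 < m t)
    (hint : ∫⁻ t in Ioi (0:ℝ), ENNReal.ofReal (1 / (m t) ^ 2) = ⊤) :
    ∀ t ≥ (0:ℝ), K t = G t := by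
  intro t₁ ht₁
  by_contra hne
  set W := wronskian f m
  have hW (t : ℝ) (ht : 0 ≤ t) : HasDerivAt W ((G t - K t) * (f t * m t)) t :=
    hasDerivAt_wronskian (hfd t ht) (hfd' t ht) (hmd t ht) (hmd' t ht) (hfode t ht) (hmode t ht)
  obtain ⟨t₀, ht₁₀, hGK⟩ := ContinuousWithinAt.exists_Ioo_forall_lt
    (fun t ht => ht₁.trans (le_of_lt ht)) (hK t₁ ht₁) (hG t₁ ht₁)
    ((hKG t₁ ht₁).lt_of_ne (Ne.symm hne))
  have ht₀ : 0 < t₀ := ht₁.trans_lt ht₁₀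
  have hanti : AntitoneOn W (Ici 0) := antitoneOn_Ici_of_hasDerivAt_nonpos hW fun t ht =>
    mul_nonpos_of_nonpos_of_nonneg (sub_nonpos.2 (hKG t ht.le))
      (mul_pos (hfpos t ht) (hmpos t ht.le)).le
  have hWt₀ : W t₀ < 0 := calc
    W t₀ < W t₁ := strictAntiOn_Icc_of_hasDerivAt_neg (fun t ht => hW t (ht₁.trans ht.1))
        (fun t ht => mul_neg_of_neg_of_pos (sub_neg.2 (hGK t ht))
          (mul_pos (hfpos t (ht₁.trans_lt ht.1)) (hmpos t (ht₁.trans ht.1.le))))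
        ⟨le_rfl, ht₁₀.le⟩ ⟨ht₁₀.le, le_rfl⟩ ht₁₀
    _ ≤ W 0 := hanti self_mem_Ici ht₁ ht₁
    _ = 0 := by simp [W, wronskian, hf'0, hm'0]
  refine lintegral_ofReal_Ioi_ne_top_of_intervalIntegral_le ht₀.le (continuousOn_one_div_sq hmd hmpos)
    (fun t _ => by positivity) (C := f t₀ / m t₀ / -W t₀) (fun t ht => ?_) hint
  have hnn (s : ℝ) (hs : s ≥ t₀) : 0 ≤ s := ht₀.le.trans hs
  rw [le_div_iff₀ (neg_pos.2 hWt₀), mul_comm]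
  refine mul_integral_one_div_sq_le_of_wronskian_le (fun s hs => hfd s (hnn s hs))
    (fun s hs => hmd s (hnn s hs)) (fun s hs => hmpos s (hnn s hs)) (fun s hs => ?_) ht
    (hfpos t (ht₀.trans_le ht)).le
  rw [neg_neg]
  exact hanti ht₀.le (hnn s hs.le) hs.le

/-- Lemma 6.1 (L–1): ODE comparison forcing equality of curvature functions. -/
theorem odeComparison_eq_of_integral_div_sq_eq_top
    (K G f m : ℝ → ℝ)
    (hK : ContinuousOn K (Ici 0)) (hG : ContinuousOn G (Ici 0))
    (hKG : ∀ t ≥ (0:ℝ), G t ≤ K t)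
    (hfd : ∀ t ≥ (0:ℝ), DifferentiableAt ℝ f t)
    (hfd' : ∀ t ≥ (0:ℝ), DifferentiableAt ℝ (deriv f) t)
    (hmd : ∀ t ≥ (0:ℝ), DifferentiableAt ℝ m t)
    (hmd' : ∀ t ≥ (0:ℝ), DifferentiableAt ℝ (deriv m) t)
    (hfode : ∀ t ≥ (0:ℝ), deriv (deriv f) t + K t * f t = 0)
    (hf0 : f 0 = 1) (hf'0 : deriv f 0 = 0)
    (hmode : ∀ t ≥ (0:ℝ), deriv (deriv m) t + G t * m t = 0)
    (hm0 : m 0 = 1) (hm'0 : deriv m 0 = 0)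
    (hfpos : ∀ t > (0:ℝ), 0 < f t)
    (hmpos : ∀ t ≥ (0:ℝ), 0 < m t)
    (hint : ∫⁻ t in Ioi (0:ℝ), ENNReal.ofReal (1 / (m t) ^ 2) = ⊤) :
    ∀ t ≥ (0:ℝ), K t = G t :=
  odeComparison_eq_of_integral_div_sq_eq_top_general K G f m hK hG hKG hfd hfd' hmd hmd' hfode hf'0
    hmode hm'0 hfpos hmpos hint
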